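/- In the half-clique reduction with parameters α, β chosen so that (3^p + Z - 1)·α^p > δ^p and β^p > δ^p, where δ^p = ∑_{e∈E} w_e + α^p Z + (3^p - 1)M: if z ∈ {0,1}^n satisfies ‖W z + b‖_p^p < δ^p, then the set S = {i : z_i = 1} has size exactly n/2, S is a clique in G, and ∑_{e ⊆ S} w_e < M. -/

import Mathlib

/-!
For `z ∈ {0,1}ⁿ` the row of a pair `e = ij` is `c_e (2(z_i + z_j) - 1)` with `c_e = w_e^{1/p}`
or `α`, and `2(z_i + z_j) - 1 ∈ {-1, 1, 3}`; so its `p`-th power is `c_eᵖ`, raised to `3ᵖ c_eᵖ`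
exactly when both endpoints lie in `S`. The last row is `β (|S| - n/2)`. Hence
`‖Wz + b‖ₚᵖ = ∑_e c_eᵖ + (3ᵖ - 1) ∑_{e ⊆ S} c_eᵖ + βᵖ ||S| - n/2|ᵖ`
with `∑_e c_eᵖ = ∑_{e ∈ E} w_e + αᵖ Z`. Comparing with `δᵖ`: a wrong size costs at least `βᵖ`,
a non-edge inside `S` costs at least `(3ᵖ - 1) αᵖ`, and otherwise the remaining slack is
`(3ᵖ - 1) (M - ∑_{e ⊆ S} w_e)`.
-/

/-- The output `W z + b` of the half-clique reduction network (see the paper):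
rows indexed by unordered vertex pairs plus one extra row. -/
noncomputable def halfCliqueOut (n : ℕ) (G : SimpleGraph (Fin n)) [DecidableRel G.Adj]
    (w : Fin n → Fin n → ℝ) (p : ℕ) (α β : ℝ) (z : Fin n → ℝ) :
    ({e : Fin n × Fin n // e.1 < e.2} ⊕ Unit) → ℝ :=
  Sum.elim
    (fun e =>
      2 * (if G.Adj e.val.1 e.val.2 then w e.val.1 e.val.2 ^ ((1 : ℝ) / p) else α) *
          (z e.val.1 + z e.val.2) -
        (if G.Adj e.val.1 e.val.2 then w e.val.1 e.val.2 ^ ((1 : ℝ) / p) else α))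
    (fun _ => β * (∑ i, z i) - ((n / 2 : ℕ) : ℝ) * β)

open Finset

lemma one_le_abs_natCast_sub_natCast {a b : ℕ} (h : a ≠ b) : 1 ≤ |(a : ℝ) - b| := by
  rcases h.lt_or_gt with hab | hab
  · have : (a : ℝ) + 1 ≤ b := by exact_mod_cast hab
    rw [abs_sub_comm]
    exact le_abs.mpr (Or.inl (by linarith))
  · have : (b : ℝ) + 1 ≤ a := by exact_mod_cast hab
    exact le_abs.mpr (Or.inl (by linarith))

lemma sum_eq_card_filter_eq_one {ι : Type*} [Fintype ι] {z : ι → ℝ}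
    (hz : ∀ i, z i = 0 ∨ z i = 1) : ∑ i, z i = #(univ.filter fun i => z i = 1) := by
  rw [← sum_boole]
  refine sum_congr rfl fun i _ => ?_
  rcases hz i with h | h <;> simp [h]

lemma pow_abs_two_mul_mul_add_sub_self {p : ℕ} (hp : Even p) (c : ℝ) {x y : ℝ}
    (hx : x = 0 ∨ x = 1) (hy : y = 0 ∨ y = 1) :
    |2 * c * (x + y) - c| ^ p = c ^ p + (3 ^ p - 1) * if x = 1 ∧ y = 1 then c ^ p else 0 := by
  rcases hx with rfl | rfl <;> rcases hy with rfl | rfl <;>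
    norm_num [hp.pow_abs, abs_mul, mul_pow] <;> ring

section HalfClique

variable {n : ℕ} (G : SimpleGraph (Fin n)) [DecidableRel G.Adj] (w : Fin n → Fin n → ℝ)
  (p : ℕ) (α : ℝ)

def pairWeight (e : {e : Fin n × Fin n // e.1 < e.2}) : ℝ :=
  if G.Adj e.val.1 e.val.2 then w e.val.1 e.val.2 else α ^ p

def innerWeight (S : Finset (Fin n)) : ℝ :=
  ∑ e ∈ univ.filter fun e : {e : Fin n × Fin n // e.1 < e.2} =>
    e.val.1 ∈ S ∧ e.val.2 ∈ S, pairWeight G w p α e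

variable {G w p α}

lemma pairWeight_nonneg (hw : ∀ i j, G.Adj i j → 0 < w i j) (hp : Even p)
    (e : {e : Fin n × Fin n // e.1 < e.2}) : 0 ≤ pairWeight G w p α e := by
  unfold pairWeight
  split_ifs with hadj
  exacts [(hw _ _ hadj).le, hp.pow_nonneg α]

lemma sum_pairWeight : ∑ e, pairWeight G w p α e =
    (∑ e : {e : Fin n × Fin n // e.1 < e.2},
      if G.Adj e.val.1 e.val.2 then w e.val.1 e.val.2 else 0) +
    α ^ p * #(univ.filter fun e : {e : Fin n × Fin n // e.1 < e.2} =>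
      ¬ G.Adj e.val.1 e.val.2) := by
  simp only [pairWeight, sum_ite, sum_const_zero, sum_const, nsmul_eq_mul]
  ring

lemma innerWeight_nonneg (hw : ∀ i j, G.Adj i j → 0 < w i j) (hp : Even p)
    (S : Finset (Fin n)) : 0 ≤ innerWeight G w p α S :=
  sum_nonneg fun e _ => pairWeight_nonneg hw hp e

lemma pow_le_innerWeight_of_not_adj (hw : ∀ i j, G.Adj i j → 0 < w i j) (hp : Even p)
    {S : Finset (Fin n)} {a b : Fin n} (hab : a < b) (ha : a ∈ S) (hb : b ∈ S)
    (hnadj : ¬ G.Adj a b) : α ^ p ≤ innerWeight G w p α S := by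
  calc α ^ p = pairWeight G w p α ⟨(a, b), hab⟩ := (if_neg hnadj).symm
    _ ≤ innerWeight G w p α S :=
      single_le_sum (fun e _ => pairWeight_nonneg hw hp e)
        (mem_filter.mpr ⟨mem_univ _, ha, hb⟩)

lemma sum_edgeWeight_inside_le_innerWeight (hp : Even p) (S : Finset (Fin n)) :
    (∑ e : {e : Fin n × Fin n // e.1 < e.2},
      if G.Adj e.val.1 e.val.2 ∧ e.val.1 ∈ S ∧ e.val.2 ∈ S then w e.val.1 e.val.2 else 0) ≤
    innerWeight G w p α S := by
  rw [innerWeight, sum_filter]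
  refine sum_le_sum fun e _ => ?_
  unfold pairWeight
  split_ifs <;> first | exact le_rfl | exact hp.pow_nonneg α | tauto

lemma pow_abs_halfCliqueOut_inl (hw : ∀ i j, G.Adj i j → 0 < w i j) (hp : Even p)
    (hp0 : 0 < p) (β : ℝ) {z : Fin n → ℝ} (hz : ∀ i, z i = 0 ∨ z i = 1)
    (e : {e : Fin n × Fin n // e.1 < e.2}) :
    |halfCliqueOut n G w p α β z (Sum.inl e)| ^ p = pairWeight G w p α e +
      (3 ^ p - 1) * if z e.val.1 = 1 ∧ z e.val.2 = 1 then pairWeight G w p α e else 0 := by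
  have hcoeff : (if G.Adj e.val.1 e.val.2 then w e.val.1 e.val.2 ^ ((1 : ℝ) / p) else α) ^ p =
      pairWeight G w p α e := by
    unfold pairWeight
    split_ifs with hadj
    · rw [one_div, Real.rpow_inv_natCast_pow (hw _ _ hadj).le hp0.ne']
    · rfl
  rw [halfCliqueOut, Sum.elim_inl, pow_abs_two_mul_mul_add_sub_self hp _ (hz _) (hz _), hcoeff]

lemma sum_pow_abs_halfCliqueOut (hw : ∀ i j, G.Adj i j → 0 < w i j) (hp : Even p)
    (hp0 : 0 < p) (β : ℝ) {z : Fin n → ℝ} (hz : ∀ i, z i = 0 ∨ z i = 1) :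
    ∑ r, |halfCliqueOut n G w p α β z r| ^ p =
      ∑ e, pairWeight G w p α e +
        (3 ^ p - 1) * innerWeight G w p α (univ.filter fun i => z i = 1) +
      β ^ p * |(#(univ.filter fun i => z i = 1) : ℝ) - ((n / 2 : ℕ) : ℝ)| ^ p := by
  have hlast : halfCliqueOut n G w p α β z (Sum.inr ()) =
      β * ((#(univ.filter fun i => z i = 1) : ℝ) - ((n / 2 : ℕ) : ℝ)) := by
    rw [halfCliqueOut, Sum.elim_inr, sum_eq_card_filter_eq_one hz]
    ring
  rw [Fintype.sum_sum_type, Fintype.sum_unique (fun u : Unit => _), PUnit.default_eq_unit, hlast,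
    abs_mul, mul_pow, hp.pow_abs β]
  simp only [pow_abs_halfCliqueOut_inl hw hp hp0 β hz, sum_add_distrib, ← mul_sum, innerWeight,
    sum_filter, mem_filter, mem_univ, true_and]

end HalfClique

lemma SimpleGraph.adj_of_forall_lt_adj {V : Type*} [LinearOrder V] {G : SimpleGraph V}
    {S : Finset V} (h : ∀ a b, a < b → a ∈ S → b ∈ S → G.Adj a b) :
    ∀ i ∈ S, ∀ j ∈ S, i ≠ j → G.Adj i j := by
  intro i hi j hj hij
  rcases hij.lt_or_gt with hlt | hgt
  exacts [h i j hlt hi hj, (h j i hgt hj hi).symm]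

theorem stmt_13 (n : ℕ) (G : SimpleGraph (Fin n)) [DecidableRel G.Adj]
    (w : Fin n → Fin n → ℝ) (hw : ∀ i j, G.Adj i j → 0 < w i j)
    (p : ℕ) (hp : Even p) (hp0 : 0 < p) (α β M δ : ℝ) (Z : ℕ)
    (hZ : Z = (Finset.univ.filter
      (fun e : {e : Fin n × Fin n // e.1 < e.2} => ¬ G.Adj e.val.1 e.val.2)).card)
    (hδ : δ ^ p = (∑ e : {e : Fin n × Fin n // e.1 < e.2},
        if G.Adj e.val.1 e.val.2 then w e.val.1 e.val.2 else 0) +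
        α ^ p * Z + ((3 : ℝ) ^ p - 1) * M)
    (hα : ((3 : ℝ) ^ p + Z - 1) * α ^ p > δ ^ p)
    (hβ : β ^ p > δ ^ p)
    (z : Fin n → ℝ) (hz : ∀ i, z i = 0 ∨ z i = 1)
    (h : (∑ r, |halfCliqueOut n G w p α β z r| ^ p) < δ ^ p) :
    let S : Finset (Fin n) := Finset.univ.filter (fun i => z i = 1)
    S.card = n / 2 ∧ (∀ i ∈ S, ∀ j ∈ S, i ≠ j → G.Adj i j) ∧
      (∑ e : {e : Fin n × Fin n // e.1 < e.2},
        if G.Adj e.val.1 e.val.2 ∧ e.val.1 ∈ S ∧ e.val.2 ∈ S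
          then w e.val.1 e.val.2 else 0) < M := by
  intro S
  rw [sum_pow_abs_halfCliqueOut hw hp hp0 β hz, sum_pairWeight, ← hZ,
    show univ.filter (fun i => z i = 1) = S from rfl] at h
  have h3p : (0 : ℝ) < 3 ^ p - 1 := sub_pos.mpr (one_lt_pow₀ (by norm_num) hp0.ne')
  have hedges : 0 ≤ ∑ e : {e : Fin n × Fin n // e.1 < e.2},
      if G.Adj e.val.1 e.val.2 then w e.val.1 e.val.2 else 0 :=
    sum_nonneg fun e _ => by split_ifs with hadj; exacts [(hw _ _ hadj).le, le_rfl]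
  have hnonedges : 0 ≤ α ^ p * Z := mul_nonneg (hp.pow_nonneg α) Z.cast_nonneg
  have hinner := mul_nonneg h3p.le (innerWeight_nonneg (α := α) hw hp S)
  have hsize : 0 ≤ β ^ p * |(#S : ℝ) - ((n / 2 : ℕ) : ℝ)| ^ p :=
    mul_nonneg (hp.pow_nonneg β) (by positivity)
  refine ⟨?_, SimpleGraph.adj_of_forall_lt_adj fun a b hab ha hb => ?_, ?_⟩
  · by_contra hne
    have : β ^ p ≤ β ^ p * |(#S : ℝ) - ((n / 2 : ℕ) : ℝ)| ^ p :=
      le_mul_of_one_le_right (hp.pow_nonneg β) (one_le_pow₀ (one_le_abs_natCast_sub_natCast hne))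
    linarith
  · by_contra hnadj
    have := mul_le_mul_of_nonneg_left
      (pow_le_innerWeight_of_not_adj (α := α) hw hp hab ha hb hnadj) h3p.le
    linarith
  · have := mul_le_mul_of_nonneg_left
      (sum_edgeWeight_inside_le_innerWeight (G := G) (w := w) (α := α) hp S) h3p.le
    exact lt_of_mul_lt_mul_left (by linarith) h3p.le
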